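/- Let $\lambda, \mu \in \mathbb{R}$ satisfy $\lambda^2 + \mu^2 + \lambda\mu + \lambda + \mu \le 0$ and $-1 \le \lambda, \mu \le 0$ and $\lambda+\mu+1 \le 0$. Then for all $C_0, C_2 > 0$: if $(\lambda+\mu+1)C_0 + (\lambda+1)C_2 \le 0$ then $\lambda C_0 - \mu C_2 \le 0$. -/

import Mathlib

/-!
Multiplying the target `l * C0 - m * C2` by `l + 1 ≥ 0` and adding `-m ≥ 0` times the
hypothesis leaves exactly `(l ^ 2 + m ^ 2 + l * m + l + m) * C0 ≤ 0`. The factor `l + 1`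
can be cancelled unless `l = -1`, where the quadratic constraint forces `m = 0`.
-/

theorem add_one_mul_sub_le_of_kkt {l m C0 C2 : ℝ} (hm0 : m ≤ 0)
    (h : (l + m + 1) * C0 + (l + 1) * C2 ≤ 0) :
    (l + 1) * (l * C0 - m * C2) ≤ (l ^ 2 + m ^ 2 + l * m + l + m) * C0 := by
  linear_combination mul_nonneg (neg_nonneg.2 hm0) (neg_nonneg.2 h)

theorem stmt_3_general (l m : ℝ) (hq : l ^ 2 + m ^ 2 + l * m + l + m ≤ 0)
    (hl : -1 ≤ l) (hm0 : m ≤ 0) :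
    ∀ C0 C2 : ℝ, 0 < C0 → 0 < C2 →
      (l + m + 1) * C0 + (l + 1) * C2 ≤ 0 → l * C0 - m * C2 ≤ 0 := by
  intro C0 C2 hC0 _ h
  rcases hl.eq_or_lt with rfl | hl
  · have hm : m = 0 :=
      pow_eq_zero_iff two_ne_zero |>.mp <| le_antisymm (by linarith) (sq_nonneg m)
    subst hm
    linarith
  · have hprod : (l + 1) * (l * C0 - m * C2) ≤ 0 :=
      (add_one_mul_sub_le_of_kkt hm0 h).trans (mul_nonpos_of_nonpos_of_nonneg hq hC0.le)
    exact nonpos_of_mul_nonpos_right hprod (by linarith)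

theorem stmt_3 (l m : ℝ) (hq : l ^ 2 + m ^ 2 + l * m + l + m ≤ 0)
    (hl : -1 ≤ l) (hl0 : l ≤ 0) (hm : -1 ≤ m) (hm0 : m ≤ 0) (hs : l + m + 1 ≤ 0) :
    ∀ C0 C2 : ℝ, 0 < C0 → 0 < C2 →
      (l + m + 1) * C0 + (l + 1) * C2 ≤ 0 → l * C0 - m * C2 ≤ 0 :=
  stmt_3_general l m hq hl hm0
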